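/- arXiv:2502.21307 — 11 statements merged into one kernel-verified Lean document; each statement's English description precedes it below -/
import Mathlib

section
/- Let L and M be algebraic lattices and let ℓ : M → L be left adjoint to f : L → M, i.e. ℓ(y) ≤ x ⟺ y ≤ f(x) for all x ∈ L and y ∈ M. Then ℓ preserves all finite meets (i.e. ℓ(⨅S) = ⨅ℓ[S] for every finite S ⊆ M; in particular ℓ(⊤) = ⊤) if and only if ℓ preserves all finite meets of compact elements (i.e. ℓ(⊤) = ⊤ and ℓ(⨅S) = ⨅ℓ[S] for every finite set S of compact elements of M). -/
open CompleteLattice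

private lemma aux_bot_compact {L : Type*} [CompleteLattice L] :
    IsCompactElement (⊥ : L) := (isCompactElement_iff_exists_le_sSup_of_le_sSup L ⊥).mpr fun s _ =>
  ⟨∅, by simp⟩

private lemma aux_sup_compact {L : Type*} [CompleteLattice L] {a b : L}
    (ha : IsCompactElement a) (hb : IsCompactElement b) :
    IsCompactElement (a ⊔ b) := by
  classical
  rw [isCompactElement_iff_exists_le_sSup_of_le_sSup] at ha hb ⊢
  intro s hs
  obtain ⟨ta, hta, ha'⟩ := ha s (le_sup_left.trans hs)
  obtain ⟨tb, htb, hb'⟩ := hb s (le_sup_right.trans hs)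
  exact ⟨ta ∪ tb, by simp [Set.union_subset_iff, hta, htb],
    sup_le (ha'.trans (Finset.sup_mono Finset.subset_union_left))
      (hb'.trans (Finset.sup_mono Finset.subset_union_right))⟩

/-- Key step: a compact element below `l a` is below `l k` for some compact `k ≤ a`. -/
private lemma aux_key {L M : Type*} [CompleteLattice L] [CompleteLattice M]
    (hM : ∀ y : M, y = sSup {k : M | IsCompactElement k ∧ k ≤ y})
    {f : L → M} {l : M → L} (gc : GaloisConnection l f)
    {c : L} (hc : IsCompactElement c) {a : M} (h : c ≤ l a) :
    ∃ k : M, IsCompactElement k ∧ k ≤ a ∧ c ≤ l k := by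
  set K : Set M := {k : M | IsCompactElement k ∧ k ≤ a} with hK
  have hla : l a = sSup (l '' K) := by
    conv_lhs => rw [hM a]
    rw [gc.l_sSup, sSup_image]
  have hdir : DirectedOn (· ≤ ·) (l '' K) := by
    rintro - ⟨x, hx, rfl⟩ - ⟨y, hy, rfl⟩
    exact ⟨l (x ⊔ y), ⟨x ⊔ y, ⟨aux_sup_compact hx.1 hy.1, sup_le hx.2 hy.2⟩, rfl⟩,
      gc.monotone_l le_sup_left, gc.monotone_l le_sup_right⟩
  have hne : (l '' K).Nonempty := ⟨l ⊥, ⟨⊥, ⟨aux_bot_compact, bot_le⟩, rfl⟩⟩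
  obtain ⟨-, ⟨k, hk, rfl⟩, hck⟩ :=
    (CompleteLattice.isCompactElement_iff_le_of_directed_sSup_le L c).mp hc
      (l '' K) hne hdir (hla ▸ h)
  exact ⟨k, hk.1, hk.2, hck⟩

/-- For algebraic lattices `L`, `M` and a left adjoint `l : M → L` of
`f : L → M`, the map `l` preserves all finite meets iff it preserves all finite meets of
compact elements. -/
theorem statement_0 {L M : Type*} [CompleteLattice L] [CompleteLattice M]
    (hL : ∀ x : L, x = sSup {k : L | IsCompactElement k ∧ k ≤ x})
    (hM : ∀ y : M, y = sSup {k : M | IsCompactElement k ∧ k ≤ y})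
    (f : L → M) (l : M → L)
    (adj : ∀ (x : L) (y : M), l y ≤ x ↔ y ≤ f x) :
    (∀ S : Set M, S.Finite → l (sInf S) = sInf (l '' S)) ↔
      (l ⊤ = ⊤ ∧
        ∀ S : Set M, S.Finite → (∀ k ∈ S, IsCompactElement k) →
          l (sInf S) = sInf (l '' S)) := by
  have gc : GaloisConnection l f := fun y x => adj x y
  constructor
  · intro h
    refine ⟨?_, fun S hS _ => h S hS⟩
    have := h ∅ Set.finite_empty
    simpa using this
  · rintro ⟨htop, hcomp⟩
    -- first, binary meets
    have hbin : ∀ a b : M, l (a ⊓ b) = l a ⊓ l b := by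
      intro a b
      refine le_antisymm (le_inf (gc.monotone_l inf_le_left) (gc.monotone_l inf_le_right)) ?_
      conv_lhs => rw [hL (l a ⊓ l b)]
      refine sSup_le ?_
      rintro c ⟨hc, hcab⟩
      obtain ⟨k, hk, hka, hck⟩ := aux_key hM gc hc (hcab.trans inf_le_left)
      obtain ⟨j, hj, hjb, hcj⟩ := aux_key hM gc hc (hcab.trans inf_le_right)
      have hkj : l (k ⊓ j) = l k ⊓ l j := by
        have := hcomp {k, j} ((Set.finite_singleton j).insert k)
          (by rintro x (rfl | rfl) <;> assumption)
        simpa [Set.image_insert_eq, sInf_insert] using this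
      calc c ≤ l k ⊓ l j := le_inf hck hcj
        _ = l (k ⊓ j) := hkj.symm
        _ ≤ l (a ⊓ b) := gc.monotone_l (inf_le_inf hka hjb)
    -- now all finite meets by induction
    intro S hS
    refine Set.Finite.induction_on S hS ?_ ?_
    · simpa using htop
    · intro a T _ _ ih
      rw [sInf_insert, hbin, ih, Set.image_insert_eq, sInf_insert]
end

section
/- Let X be a BDGM-space: a compact topological space equipped with a partial order in which all finite meets exist (in particular X has a greatest element ⊤) and such that whenever x ≰ y there is a clopen filter F with x ∈ F and y ∉ F. Then every subset S ⊆ X has a greatest lower bound; in particular X is a complete lattice. -/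
/-- A filter of a partially ordered set with finite meets:
a nonempty upper set closed under binary meets. -/
def IsFilterSet {X : Type*} [SemilatticeInf X] (F : Set X) : Prop :=
  F.Nonempty ∧ IsUpperSet F ∧ ∀ x ∈ F, ∀ y ∈ F, x ⊓ y ∈ F

/-- In a BDGM-space (a compact space with a partial order having all finite
meets, in which points `x ≰ y` are separated by clopen filters), every subset has a
greatest lower bound; in particular the underlying poset is a complete lattice. -/
theorem statement_1 {X : Type*} [TopologicalSpace X] [CompactSpace X]
    [SemilatticeInf X] [OrderTop X]
    (hsep : ∀ x y : X, ¬x ≤ y →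
      ∃ F : Set X, IsClopen F ∧ IsFilterSet F ∧ x ∈ F ∧ y ∉ F) :
    ∀ S : Set X, ∃ a : X, IsGLB S a := by
  -- downward closures of points are closed
  have hdown : ∀ x : X, IsClosed {y : X | y ≤ x} := by
    intro x
    rw [← isOpen_compl_iff, isOpen_iff_forall_mem_open]
    intro z hz
    obtain ⟨F, hFc, ⟨_, hup, _⟩, hzF, hxF⟩ := hsep z x hz
    exact ⟨F, fun w hw hwx => hxF (hup hwx hw), hFc.isOpen, hzF⟩
  intro S
  -- T = intersection of all clopen filters containing S
  set T : Set X := ⋂ F ∈ {F : Set X | IsClopen F ∧ IsFilterSet F ∧ S ⊆ F}, F with hT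
  have hmemT : ∀ z : X, z ∈ T ↔
      ∀ F : Set X, IsClopen F → IsFilterSet F → S ⊆ F → z ∈ F := by
    intro z
    simp only [hT, Set.mem_iInter, Set.mem_setOf_eq]
    exact ⟨fun h F h1 h2 h3 => h F ⟨h1, h2, h3⟩, fun h F ⟨h1, h2, h3⟩ => h F h1 h2 h3⟩
  have htopT : (⊤ : X) ∈ T := by
    rw [hmemT]
    intro F _ ⟨⟨x, hx⟩, hup, _⟩ _
    exact hup le_top hx
  have hTclosed : IsClosed T :=
    isClosed_biInter fun F hF => hF.1.isClosed
  have hST : S ⊆ T := fun s hs => (hmemT s).2 fun F _ _ h3 => h3 hs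
  have hTmeet : ∀ x ∈ T, ∀ y ∈ T, x ⊓ y ∈ T := by
    intro x hx y hy
    rw [hmemT] at hx hy ⊢
    intro F h1 h2 h3
    exact h2.2.2 x (hx F h1 h2 h3) y (hy F h1 h2 h3)
  -- the directed family of closed sets T ∩ ↓x for x ∈ T has nonempty intersection
  have : Nonempty T := ⟨⟨⊤, htopT⟩⟩
  have hne : (⋂ x : T, (T ∩ {y : X | y ≤ (x : X)})).Nonempty := by
    apply IsCompact.nonempty_iInter_of_directed_nonempty_isCompact_isClosed
    · rintro ⟨x, hx⟩ ⟨y, hy⟩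
      refine ⟨⟨x ⊓ y, hTmeet x hx y hy⟩, ?_, ?_⟩
      · exact fun z hz => ⟨hz.1, le_trans hz.2 inf_le_left⟩
      · exact fun z hz => ⟨hz.1, le_trans hz.2 inf_le_right⟩
    · exact fun ⟨x, hx⟩ => ⟨x, hx, le_refl x⟩
    · exact fun ⟨x, hx⟩ => (hTclosed.inter (hdown x)).isCompact
    · exact fun ⟨x, hx⟩ => hTclosed.inter (hdown x)
  obtain ⟨a, ha⟩ := hne
  simp only [Set.mem_iInter, Set.mem_inter_iff, Set.mem_setOf_eq] at ha
  have haT : a ∈ T := (ha ⟨⊤, htopT⟩).1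
  have hamin : ∀ x ∈ T, a ≤ x := fun x hx => (ha ⟨x, hx⟩).2
  refine ⟨a, fun s hs => hamin s (hST hs), fun b hb => ?_⟩
  -- b a lower bound of S implies b ≤ a
  by_contra hba
  obtain ⟨F, hFc, hFf, hbF, haF⟩ := hsep b a hba
  have hSF : S ⊆ F := fun s hs => hFf.2.1 (hb hs) hbF
  exact haF ((hmemT a).1 haT F hFc hFf hSF)
end

section
/- Let X be a complete lattice equipped with a compact topology such that whenever x ≰ y there is a clopen filter F with x ∈ F and y ∉ F. Then a subset F ⊆ X is a clopen filter if and only if F = ↑k = {x : k ≤ x} for some compact element k of X. -/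
section Aux
variable {X : Type*} [TopologicalSpace X] [CompactSpace X] [CompleteLattice X]
variable (hsep : ∀ x y : X, ¬x ≤ y →
      ∃ F : Set X, IsClopen F ∧ IsFilterSet F ∧ x ∈ F ∧ y ∉ F)

include hsep

theorem aux_ici_closed (a : X) : IsClosed (Set.Ici a) := by
  have h : Set.Ici a = ⋂ (G : Set X) (_ : IsClopen G ∧ IsFilterSet G ∧ a ∈ G), G := by
    ext x
    simp only [Set.mem_iInter, Set.mem_Ici]
    constructor
    · rintro hax G ⟨hG1, hG2, haG⟩
      exact hG2.2.1 hax haG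
    · intro h
      by_contra hax
      obtain ⟨G, hG1, hG2, haG, hxG⟩ := hsep a x hax
      exact hxG (h G ⟨hG1, hG2, haG⟩)
  rw [h]
  exact isClosed_iInter fun G => isClosed_iInter fun hG => hG.1.isClosed

theorem aux_iic_closed (a : X) : IsClosed (Set.Iic a) := by
  have h : Set.Iic a = ⋂ (G : Set X) (_ : IsClopen G ∧ IsFilterSet G ∧ a ∉ G), Gᶜ := by
    ext x
    simp only [Set.mem_iInter, Set.mem_Iic, Set.mem_compl_iff]
    constructor
    · rintro hax G ⟨hG1, hG2, haG⟩ hxG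
      exact haG (hG2.2.1 hax hxG)
    · intro h
      by_contra hax
      obtain ⟨G, hG1, hG2, hxG, haG⟩ := hsep x a hax
      exact h G ⟨hG1, hG2, haG⟩ hxG
  rw [h]
  exact isClosed_iInter fun G => isClosed_iInter fun hG => hG.1.compl.isClosed

theorem aux_inf_mem {F : Set X} (hcl : IsClopen F) (hf : IsFilterSet F) :
    sInf F ∈ F := by
  obtain ⟨⟨x0, hx0⟩, hup, hmeet⟩ := hf
  haveI : Nonempty F := ⟨⟨x0, hx0⟩⟩
  have key : (⋂ x : F, F ∩ Set.Iic (x : X)).Nonempty := by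
    apply IsCompact.nonempty_iInter_of_directed_nonempty_isCompact_isClosed
    · rintro ⟨a, ha⟩ ⟨b, hb⟩
      refine ⟨⟨a ⊓ b, hmeet _ ha _ hb⟩, ?_, ?_⟩
      · exact fun y hy => ⟨hy.1, hy.2.trans inf_le_left⟩
      · exact fun y hy => ⟨hy.1, hy.2.trans inf_le_right⟩
    · exact fun x => ⟨x, x.2, le_refl _⟩
    · exact fun x => (hcl.isClosed.inter (aux_iic_closed hsep _)).isCompact
    · exact fun x => hcl.isClosed.inter (aux_iic_closed hsep _)
  obtain ⟨y, hy⟩ := key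
  simp only [Set.mem_iInter, Set.mem_inter_iff, Set.mem_Iic] at hy
  have hyF : y ∈ F := (hy ⟨x0, hx0⟩).1
  have : sInf F = y :=
    le_antisymm (sInf_le hyF) (le_sInf fun b hb => (hy ⟨b, hb⟩).2)
  rwa [this]

theorem aux_clopen_filter_eq {G : Set X} (hcl : IsClopen G) (hf : IsFilterSet G) :
    G = Set.Ici (sInf G) :=
  Set.Subset.antisymm (fun g hg => sInf_le hg)
    (fun g hg => hf.2.1 hg (aux_inf_mem hsep hcl hf))

end Aux


/-- In a complete lattice with a compact topology in which `x ≰ y` are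
separated by clopen filters, the clopen filters are exactly the principal upsets `↑k`
of compact elements `k`. -/
theorem statement_2 {X : Type*} [TopologicalSpace X] [CompactSpace X] [CompleteLattice X]
    (hsep : ∀ x y : X, ¬x ≤ y →
      ∃ F : Set X, IsClopen F ∧ IsFilterSet F ∧ x ∈ F ∧ y ∉ F)
    (F : Set X) :
    (IsClopen F ∧ IsFilterSet F) ↔
      ∃ k : X, IsCompactElement k ∧ F = Set.Ici k := by
  constructor
  · rintro ⟨hcl, hf⟩
    refine ⟨sInf F, ?_, aux_clopen_filter_eq hsep hcl hf⟩
    have hFeq := aux_clopen_filter_eq hsep hcl hf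
    rw [CompleteLattice.isCompactElement_iff_le_of_directed_sSup_le X]
    intro D hne hdir hle
    by_contra hcon
    push_neg at hcon
    have hDF : ∀ d ∈ D, d ∉ F := by
      intro d hd hdF
      rw [hFeq] at hdF; exact hcon d hd hdF
    haveI : Nonempty D := hne.to_subtype
    have key : (⋂ d : D, Set.Ici (d : X) ∩ Fᶜ).Nonempty := by
      apply IsCompact.nonempty_iInter_of_directed_nonempty_isCompact_isClosed
      · rintro ⟨a, ha⟩ ⟨b, hb⟩
        obtain ⟨c, hc, hac, hbc⟩ := hdir a ha b hb
        exact ⟨⟨c, hc⟩, fun y hy => ⟨hac.trans hy.1, hy.2⟩,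
          fun y hy => ⟨hbc.trans hy.1, hy.2⟩⟩
      · exact fun d => ⟨d, le_refl _, hDF d d.2⟩
      · exact fun d => ((aux_ici_closed hsep _).inter hcl.isOpen.isClosed_compl).isCompact
      · exact fun d => (aux_ici_closed hsep _).inter hcl.isOpen.isClosed_compl
    obtain ⟨y, hy⟩ := key
    simp only [Set.mem_iInter, Set.mem_inter_iff, Set.mem_Ici, Set.mem_compl_iff] at hy
    have hsup : sSup D ≤ y := sSup_le fun d hd => (hy ⟨d, hd⟩).1
    obtain ⟨d0, hd0⟩ := hne
    have hyF : y ∈ F := by rw [hFeq]; exact Set.mem_Ici.mpr (hle.trans hsup)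
    exact (hy ⟨d0, hd0⟩).2 hyF
  · rintro ⟨k, hk, rfl⟩
    refine ⟨⟨aux_ici_closed hsep k, ?_⟩, ⟨k, le_refl k⟩, isUpperSet_Ici k,
      fun x hx y hy => le_inf hx hy⟩
    rw [isOpen_iff_forall_mem_open]
    intro x hx
    set M := {m : X | m ≤ x ∧ IsClopen (Set.Ici m)} with hM
    have hbot : ⊥ ∈ M := ⟨bot_le, by rw [Set.Ici_bot]; exact isClopen_univ⟩
    have hdir : DirectedOn (· ≤ ·) M := by
      rintro a ⟨hax, ha⟩ b ⟨hbx, hb⟩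
      refine ⟨a ⊔ b, ⟨sup_le hax hbx, ?_⟩, le_sup_left, le_sup_right⟩
      rw [← Set.Ici_inter_Ici]
      exact ha.inter hb
    have hxle : x ≤ sSup M := by
      by_contra hxs
      obtain ⟨G, hG1, hG2, hxG, hsG⟩ := hsep x (sSup M) hxs
      have hGeq := aux_clopen_filter_eq hsep hG1 hG2
      have hmM : sInf G ∈ M := ⟨sInf_le hxG, hGeq ▸ hG1⟩
      exact hsG (hGeq ▸ Set.mem_Ici.mpr (le_sSup hmM))
    obtain ⟨m, hmM, hkm⟩ :=
      (CompleteLattice.isCompactElement_iff_le_of_directed_sSup_le X k).mp hk M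
        ⟨⊥, hbot⟩ hdir (le_trans hx hxle)
    exact ⟨Set.Ici m, Set.Ici_subset_Ici.mpr hkm, hmM.2.isOpen, Set.mem_Ici.mpr hmM.1⟩
end

section
/- Let X be a compact Hausdorff topological space whose underlying set carries a complete lattice structure. Then the following are equivalent: (a) X is an F-space, i.e. there exists a family X* of subsets of X such that every member of X* is a clopen principal upset ↑x, the topology of X is generated by the subbasis X* ∪ {X∖V : V ∈ X*}, the set {x ∈ X : ↑x ∈ X*} is join-dense in X (every element of X is a supremum of elements of this set), and X* is closed under finite intersections (in particular X ∈ X*); (b) X is an algebraic lattice and the topology of X is the Lawson topology. Moreover, any family X* as in (a) necessarily equals {↑k : k a compact element of X}, which is exactly the collection of clopen filters of X. -/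
/-- A Scott-open subset of a complete lattice: an upper set `U` such that whenever the
supremum of a (nonempty) directed set belongs to `U`, the directed set meets `U`. -/
def ScottOpen {X : Type*} [CompleteLattice X] (U : Set X) : Prop :=
  IsUpperSet U ∧
    ∀ S : Set X, S.Nonempty → DirectedOn (· ≤ ·) S → sSup S ∈ U → (S ∩ U).Nonempty

/-- The Lawson topology on a complete lattice: the topology generated by the Scott-open
sets together with the complements of principal upsets `↑x`. -/
def lawsonTop (X : Type*) [CompleteLattice X] : TopologicalSpace X :=
  TopologicalSpace.generateFrom
    ({U : Set X | ScottOpen U} ∪ {S : Set X | ∃ x : X, S = (Set.Ici x)ᶜ})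

/-- A family `Xs` witnessing that `(X, t)` is an F-space: every member of `Xs` is a
clopen principal upset, `t` is generated by the subbasis `Xs ∪ {Vᶜ : V ∈ Xs}`, the set
`{x : ↑x ∈ Xs}` is join-dense, and `Xs` is closed under finite intersections. -/
def FStarFamily {X : Type*} [CompleteLattice X] (t : TopologicalSpace X)
    (Xs : Set (Set X)) : Prop :=
  (∀ V ∈ Xs, @IsClopen X t V ∧ ∃ x : X, V = Set.Ici x) ∧
  (t = TopologicalSpace.generateFrom (Xs ∪ ((fun V : Set X => Vᶜ) '' Xs))) ∧
  (∀ a : X, ∃ S : Set X, S ⊆ {x : X | Set.Ici x ∈ Xs} ∧ a = sSup S) ∧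
  (∀ S : Set (Set X), S ⊆ Xs → S.Finite → ⋂₀ S ∈ Xs)

open CompleteLattice TopologicalSpace Set

section Aux
variable {X : Type*} [CompleteLattice X]

/-- The collection of principal upsets at compact elements. -/
def Kups (X : Type*) [CompleteLattice X] : Set (Set X) :=
  {F : Set X | ∃ k : X, IsCompactElement k ∧ F = Set.Ici k}

lemma ici_sSup (S : Set X) : Ici (sSup S) = ⋂₀ (Ici '' S) := by
  ext z
  simp [sSup_le_iff]

lemma isCompactElement_bot' : IsCompactElement (⊥ : X) := by
  rw [isCompactElement_iff_exists_le_sSup_of_le_sSup]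
  intro s _
  exact ⟨∅, by simp⟩

lemma isCompactElement_sup' {a b : X} (ha : IsCompactElement a) (hb : IsCompactElement b) :
    IsCompactElement (a ⊔ b) := by
  classical
  have h := isCompactElement_finsetSup (f := (id : X → X)) ({a, b} : Finset X) ?_
  · simpa using h
  · intro x hx
    rcases Finset.mem_insert.mp hx with h | h
    · simpa [h]
    · simp only [Finset.mem_singleton] at h; simpa [h]

lemma directedOn_compacts (u : X) :
    DirectedOn (· ≤ ·) {k : X | IsCompactElement k ∧ k ≤ u} := fun a ha b hb =>
  ⟨a ⊔ b, ⟨isCompactElement_sup' ha.1 hb.1, sup_le ha.2 hb.2⟩, le_sup_left, le_sup_right⟩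

lemma scottOpen_Ici {k : X} (hk : IsCompactElement k) : ScottOpen (Ici k) := by
  refine ⟨isUpperSet_Ici k, fun S hne hdir hmem => ?_⟩
  obtain ⟨d, hd, hkd⟩ :=
    (isCompactElement_iff_le_of_directed_sSup_le X k).mp hk S hne hdir hmem
  exact ⟨d, hd, hkd⟩

lemma filter_sInf_mem {F : Set X} (hF : IsFilterSet F) :
    ∀ T : Set X, T.Finite → T ⊆ F → T.Nonempty → sInf T ∈ F := by
  intro T hfin
  refine Set.Finite.induction_on _ hfin (fun _ h => absurd h (by simp)) ?_
  intro a T' ha hfinT ih hsub hne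
  rw [sInf_insert]
  rcases T'.eq_empty_or_nonempty with h | h
  · subst h; simpa using hsub (mem_insert a ∅)
  · exact hF.2.2 a (hsub (mem_insert _ _)) _
      (ih (fun x hx => hsub (mem_insert_of_mem _ hx)) h)

end Aux

section Top
variable {X : Type*} [CompleteLattice X]

lemma compact_of_open_Ici [t : TopologicalSpace X] [CompactSpace X]
    (hcl : ∀ y : X, IsClosed (Ici y)) {x : X} (ho : IsOpen (Ici x)) :
    IsCompactElement x := by
  rw [isCompactElement_iff_le_of_directed_sSup_le]
  intro S hSne hdir hle
  by_contra hno
  push_neg at hno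
  have hne : Nonempty S := hSne.to_subtype
  have key := IsCompact.nonempty_iInter_of_directed_nonempty_isCompact_isClosed
    (fun d : S => Ici (d : X) ∩ (Ici x)ᶜ) ?_ ?_ ?_ ?_
  · obtain ⟨z, hz⟩ := key
    simp only [Set.mem_iInter, Set.mem_inter_iff, Set.mem_Ici, Set.mem_compl_iff] at hz
    have h1 : sSup S ≤ z := sSup_le fun d hd => (hz ⟨d, hd⟩).1
    obtain ⟨d₀, hd₀⟩ := hSne
    exact (hz ⟨d₀, hd₀⟩).2 (hle.trans h1)
  · rintro ⟨a, ha⟩ ⟨b, hb⟩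
    obtain ⟨c, hc, hac, hbc⟩ := hdir a ha b hb
    exact ⟨⟨c, hc⟩, fun z hz => ⟨(hac.trans hz.1 : a ≤ z), hz.2⟩,
      fun z hz => ⟨(hbc.trans hz.1 : b ≤ z), hz.2⟩⟩
  · rintro ⟨d, hd⟩
    exact ⟨d, le_refl d, hno d hd⟩
  · rintro ⟨d, hd⟩
    exact ((hcl d).inter (isClosed_compl_iff.mpr ho)).isCompact
  · rintro ⟨d, hd⟩
    exact (hcl d).inter (isClosed_compl_iff.mpr ho)

lemma lawson_eq_gen (halg : ∀ x : X, x = sSup {k : X | IsCompactElement k ∧ k ≤ x}) :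
    lawsonTop X = TopologicalSpace.generateFrom
      (Kups X ∪ ((fun V : Set X => Vᶜ) '' Kups X)) := by
  apply le_antisymm
  · rw [le_generateFrom_iff_subset_isOpen]
    rintro s (⟨k, hk, rfl⟩ | ⟨V, ⟨k, hk, rfl⟩, rfl⟩)
    · exact isOpen_generateFrom_of_mem (Or.inl (scottOpen_Ici hk))
    · exact isOpen_generateFrom_of_mem (Or.inr ⟨k, rfl⟩)
  · rw [lawsonTop, le_generateFrom_iff_subset_isOpen]
    rintro s (hs | ⟨x, rfl⟩)
    · -- s Scott open
      obtain ⟨hup, hsc⟩ := hs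
      have heq : s = ⋃₀ {V : Set X | ∃ k : X, IsCompactElement k ∧ k ∈ s ∧ V = Ici k} := by
        apply Set.Subset.antisymm
        · intro u hu
          have hmem : sSup {k : X | IsCompactElement k ∧ k ≤ u} ∈ s := by
            rw [← halg u]; exact hu
          obtain ⟨k, hk, hks⟩ := hsc {k : X | IsCompactElement k ∧ k ≤ u} ⟨⊥, isCompactElement_bot', bot_le⟩
            (directedOn_compacts u) hmem
          exact ⟨Ici k, ⟨k, hk.1, hks, rfl⟩, hk.2⟩
        · rintro u ⟨V, ⟨k, hk, hks, rfl⟩, hu⟩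
          exact hup hu hks
      simp only [Set.mem_setOf_eq]
      rw [heq]
      refine TopologicalSpace.GenerateOpen.sUnion _ ?_
      rintro V ⟨k, hk, -, rfl⟩
      exact TopologicalSpace.GenerateOpen.basic _ (Or.inl ⟨k, hk, rfl⟩)
    · -- s = (Ici x)ᶜ
      have heq : (Ici x)ᶜ =
          ⋃₀ {V : Set X | ∃ k : X, IsCompactElement k ∧ k ≤ x ∧ V = (Ici k)ᶜ} := by
        apply Set.Subset.antisymm
        · intro z hz
          simp only [Set.mem_compl_iff, Set.mem_Ici] at hz
          by_contra hcon
          apply hz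
          rw [halg x]
          apply _root_.sSup_le
          rintro k ⟨hk, hkx⟩
          by_contra hkz
          exact hcon ⟨(Ici k)ᶜ, ⟨k, hk, hkx, rfl⟩, hkz⟩
        · rintro z ⟨V, ⟨k, hk, hkx, rfl⟩, hz⟩
          simp only [Set.mem_compl_iff, Set.mem_Ici] at hz ⊢
          exact fun hxz => hz (hkx.trans hxz)
      simp only [Set.mem_setOf_eq]
      rw [heq]
      refine TopologicalSpace.GenerateOpen.sUnion _ ?_
      rintro V ⟨k, hk, -, rfl⟩
      exact TopologicalSpace.GenerateOpen.basic _ (Or.inr ⟨Ici k, ⟨k, hk, rfl⟩, rfl⟩)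

end Top

section Main
variable {X : Type*} [t : TopologicalSpace X] [CompactSpace X] [CompleteLattice X]

lemma fstar_main {Xs : Set (Set X)} (hX : FStarFamily t Xs) :
    (∀ x : X, x = sSup {k : X | IsCompactElement k ∧ k ≤ x}) ∧
    t = lawsonTop X ∧ Xs = Kups X ∧
    Xs = {F : Set X | IsClopen F ∧ IsFilterSet F} := by
  obtain ⟨h1, h2, h3, h4⟩ := hX
  have hIciClosed : ∀ y : X, IsClosed (Ici y) := by
    intro y
    obtain ⟨S, hS, rfl⟩ := h3 y
    rw [ici_sSup]
    apply isClosed_sInter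
    rintro T ⟨s, hs, rfl⟩
    exact (h1 _ (hS hs)).1.1
  have hXsK : Xs ⊆ Kups X := by
    intro V hV
    obtain ⟨hclo, x, rfl⟩ := h1 V hV
    exact ⟨x, compact_of_open_Ici hIciClosed hclo.2, rfl⟩
  have halg : ∀ x : X, x = sSup {k : X | IsCompactElement k ∧ k ≤ x} := by
    intro x
    apply le_antisymm
    · obtain ⟨S, hS, hx⟩ := h3 x
      calc x = sSup S := hx
        _ ≤ sSup {k : X | IsCompactElement k ∧ k ≤ x} := by
            apply sSup_le_sSup
            intro s hs
            obtain ⟨k, hk, hEq⟩ := hXsK (hS hs)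
            have hsk : s = k := Set.Ici_injective hEq
            exact ⟨hsk ▸ hk, hx ▸ le_sSup hs⟩
    · exact _root_.sSup_le fun k hk => hk.2
  have hKXs : Kups X ⊆ Xs := by
    rintro _ ⟨k, hk, rfl⟩
    obtain ⟨S, hS, hkS⟩ := h3 k
    obtain ⟨T, hTS, hkT⟩ := (isCompactElement_iff_exists_le_sSup_of_le_sSup X k).mp hk S (le_of_eq hkS)
    have hkeq : k = sSup (↑T : Set X) := by
      apply le_antisymm
      · rw [← Finset.sup_id_eq_sSup]; exact hkT
      · exact _root_.sSup_le fun s hs => hkS ▸ le_sSup (hTS hs)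
    rw [hkeq, ici_sSup]
    refine h4 _ ?_ (T.finite_toSet.image _)
    rintro _ ⟨s, hs, rfl⟩
    exact hS (hTS hs)
  have hXsEq : Xs = Kups X := Set.Subset.antisymm hXsK hKXs
  have hgen : t = TopologicalSpace.generateFrom
      (Kups X ∪ ((fun V : Set X => Vᶜ) '' Kups X)) := by rw [h2, hXsEq]
  have hteq : t = lawsonTop X := by rw [hgen, lawson_eq_gen halg]
  refine ⟨halg, hteq, hXsEq, ?_⟩
  apply Set.Subset.antisymm
  · intro V hV
    obtain ⟨hclo, x, rfl⟩ := h1 V hV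
    exact ⟨hclo, ⟨x, le_refl x⟩, isUpperSet_Ici x, fun a ha b hb => le_inf ha hb⟩
  · rintro F ⟨hclo, hFil⟩
    have hb := TopologicalSpace.isTopologicalBasis_of_subbasis hgen
    obtain ⟨d₀, hd₀⟩ := hFil.1
    have hinf : sInf F ∈ F := by
      have hcl2 : sInf F ∈ closure F := by
        rw [hb.mem_closure_iff]
        rintro o ⟨f, ⟨hffin, hfsub⟩, rfl⟩ hmem
        classical
        have hch : ∀ s ∈ f, ∃ ds, ds ∈ F ∧ ds ∈ s := by
          intro s hs
          rcases hfsub hs with ⟨k, hk, rfl⟩ | ⟨V, ⟨m, hm, rfl⟩, rfl⟩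
          · exact ⟨d₀, hd₀, Set.mem_Ici.mpr
              (le_trans (Set.mem_sInter.mp hmem _ hs) (sInf_le hd₀))⟩
          · have hms : ¬ m ≤ sInf F := Set.mem_sInter.mp hmem _ hs
            by_contra hcon
            push_neg at hcon
            simp only [Set.mem_compl_iff, not_not, Set.mem_Ici] at hcon
            exact hms (le_sInf hcon)
        choose! c hc1 hc2 using hch
        have hTfin : (insert d₀ (c '' f)).Finite := (hffin.image c).insert d₀
        have hTsub : insert d₀ (c '' f) ⊆ F := by
          rintro z (rfl | ⟨s, hs, rfl⟩)
          · exact hd₀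
          · exact hc1 s hs
        have hdF : sInf (insert d₀ (c '' f)) ∈ F :=
          filter_sInf_mem hFil _ hTfin hTsub ⟨d₀, mem_insert _ _⟩
        refine ⟨sInf (insert d₀ (c '' f)), ?_, hdF⟩
        rw [Set.mem_sInter]
        intro s hs
        rcases hfsub hs with ⟨k, hk, rfl⟩ | ⟨V, ⟨m, hm, rfl⟩, rfl⟩
        · exact Set.mem_Ici.mpr (le_trans (Set.mem_sInter.mp hmem _ hs) (sInf_le hdF))
        · intro hcon
          have h1' : sInf (insert d₀ (c '' f)) ≤ c ((Ici m)ᶜ) :=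
            sInf_le (mem_insert_of_mem _ ⟨_, hs, rfl⟩)
          exact hc2 _ hs (Set.mem_Ici.mpr (le_trans (Set.mem_Ici.mp hcon) h1'))
      rwa [hclo.1.closure_eq] at hcl2
    have hFeq : F = Ici (sInf F) := Set.Subset.antisymm (fun z hz => sInf_le hz)
      (fun z hz => hFil.2.1 hz hinf)
    rw [hXsEq]
    exact ⟨sInf F, compact_of_open_Ici hIciClosed (hFeq ▸ hclo.2), hFeq⟩

lemma fstar_of_alg (halg : ∀ x : X, x = sSup {k : X | IsCompactElement k ∧ k ≤ x})
    (ht : t = lawsonTop X) : FStarFamily t (Kups X) := by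
  have hgen : t = TopologicalSpace.generateFrom
      (Kups X ∪ ((fun V : Set X => Vᶜ) '' Kups X)) := by rw [ht, lawson_eq_gen halg]
  refine ⟨?_, hgen, ?_, ?_⟩
  · rintro V ⟨k, hk, rfl⟩
    refine ⟨?_, k, rfl⟩
    constructor
    · rw [← isOpen_compl_iff, hgen]
      exact TopologicalSpace.GenerateOpen.basic _ (Or.inr ⟨Ici k, ⟨k, hk, rfl⟩, rfl⟩)
    · rw [hgen]
      exact TopologicalSpace.GenerateOpen.basic _ (Or.inl ⟨k, hk, rfl⟩)
  · intro a
    exact ⟨{k : X | IsCompactElement k ∧ k ≤ a}, fun k hk => ⟨k, hk.1, rfl⟩, halg a⟩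
  · intro S hsub hfin
    classical
    have hKfin : (Set.Ici ⁻¹' S : Set X).Finite :=
      hfin.preimage (Set.Ici_injective.injOn)
    have hKcomp : ∀ k ∈ (Set.Ici ⁻¹' S : Set X), IsCompactElement k := by
      intro k hk
      obtain ⟨k', hk', hEq⟩ := hsub hk
      exact (Set.Ici_injective hEq) ▸ hk'
    have heq : ⋂₀ S = Ici (sSup (Set.Ici ⁻¹' S : Set X)) := by
      apply Set.Subset.antisymm
      · intro z hz
        rw [Set.mem_Ici]
        apply _root_.sSup_le
        intro k hk
        exact Set.mem_sInter.mp hz _ hk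
      · intro z hz
        rw [Set.mem_sInter]
        intro V hV
        obtain ⟨k, hk, rfl⟩ := hsub hV
        exact Set.mem_Ici.mpr (le_trans (le_sSup hV) (Set.mem_Ici.mp hz))
    rw [heq]
    have hsf : sSup (Set.Ici ⁻¹' S : Set X) = hKfin.toFinset.sup id := by
      rw [Finset.sup_id_eq_sSup, hKfin.coe_toFinset]
    refine ⟨_, ?_, rfl⟩
    rw [hsf]
    exact isCompactElement_finsetSup _ fun x hx => hKcomp x (hKfin.mem_toFinset.mp hx)

end Main

/-- The Mathlib (Dec 2024) definition of a compact element of a complete lattice. -/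
def CompleteLattice.IsCompactElement {α : Type*} [CompleteLattice α] (k : α) :=
  ∀ s : Set α, k ≤ sSup s → ∃ t : Finset α, ↑t ⊆ s ∧ k ≤ t.sup id

/-- A compact Hausdorff space carrying a complete lattice structure is an
F-space iff it is an algebraic lattice whose topology is the Lawson topology; moreover
any witnessing family `X*` equals `{↑k : k compact}`, the collection of clopen filters. -/
theorem statement_5 {X : Type*} [t : TopologicalSpace X] [CompactSpace X] [T2Space X]
    [CompleteLattice X] :
    ((∃ Xs : Set (Set X), FStarFamily t Xs) ↔
      ((∀ x : X, x = sSup {k : X | CompleteLattice.IsCompactElement k ∧ k ≤ x}) ∧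
        t = lawsonTop X)) ∧
    (∀ Xs : Set (Set X), FStarFamily t Xs →
      Xs = {F : Set X | ∃ k : X, CompleteLattice.IsCompactElement k ∧ F = Set.Ici k} ∧
      Xs = {F : Set X | IsClopen F ∧ IsFilterSet F}) := by
  have hiff : ∀ k : X, CompleteLattice.IsCompactElement k ↔ _root_.IsCompactElement k :=
    fun k => (isCompactElement_iff_exists_le_sSup_of_le_sSup X k).symm
  simp only [hiff]
  constructor
  · constructor
    · rintro ⟨Xs, hX⟩
      obtain ⟨halg, hteq, -, -⟩ := fstar_main hX
      exact ⟨halg, hteq⟩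
    · rintro ⟨halg, ht⟩
      exact ⟨Kups X, fstar_of_alg halg ht⟩
  · intro Xs hX
    obtain ⟨-, -, h3, h4⟩ := fstar_main hX
    exact ⟨h3, h4⟩
end

section
/- Let X and Y be algebraic lattices, each equipped with its Lawson topology, and let R ⊆ X × Y be a DH-relation. For A ⊆ X and B ⊆ Y write φA = Y ∖ R[A] and ψB = X ∖ R⁻¹[B]. Then: for every clopen filter U of X, φU is a clopen filter of Y and ψ(φU) = U; for every clopen filter V of Y, ψV is a clopen filter of X and φ(ψV) = V. Consequently φ and ψ restrict to mutually inverse, inclusion-reversing bijections between the clopen filters of X and the clopen filters of Y. -/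
/-- The image `R[A] = {y : ∃ x ∈ A, x R y}` of a set under a relation. -/
def relImage {X Y : Type*} (R : X → Y → Prop) (A : Set X) : Set Y :=
  {y | ∃ x ∈ A, R x y}

/-- The preimage `R⁻¹[B] = {x : ∃ y ∈ B, x R y}` of a set under a relation. -/
def relPreimage {X Y : Type*} (R : X → Y → Prop) (B : Set Y) : Set X :=
  {x | ∃ y ∈ B, R x y}

/-- A DH-relation between complete lattices `X` and `Y` carrying topologies `tX`, `tY`:
`R` is interior, the complements `(R[x])ᶜ` and `(R⁻¹[y])ᶜ` are filters, and
`R[x] ⊆ R[x'] → x' ≤ x`, `R⁻¹[y] ⊆ R⁻¹[y'] → y' ≤ y`. -/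
def IsDHRel {X Y : Type*} [CompleteLattice X] [CompleteLattice Y]
    (tX : TopologicalSpace X) (tY : TopologicalSpace Y) (R : X → Y → Prop) : Prop :=
  (∀ x : X, @IsClosed Y tY {y | R x y}) ∧
  (∀ U : Set X, @IsClopen X tX U → @IsClopen Y tY (relImage R U)) ∧
  (∀ y : Y, @IsClosed X tX {x | R x y}) ∧
  (∀ V : Set Y, @IsClopen Y tY V → @IsClopen X tX (relPreimage R V)) ∧
  (∀ x : X, IsFilterSet {y | R x y}ᶜ) ∧
  (∀ y : Y, IsFilterSet {x | R x y}ᶜ) ∧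
  (∀ x x' : X, {y | R x y} ⊆ {y | R x' y} → x' ≤ x) ∧
  (∀ y y' : Y, {x | R x y} ⊆ {x | R x y'} → y' ≤ y)

lemma tail_lemma {X : Type*} [CompleteLattice X] {U : Set X} (hf : IsFilterSet U) :
    ∀ O : Set X,
      TopologicalSpace.GenerateOpen
        ({U : Set X | ScottOpen U} ∪ {S : Set X | ∃ x : X, S = (Set.Ici x)ᶜ}) O →
      sInf U ∈ O → ∃ u ∈ U, ∀ u' ∈ U, u' ≤ u → u' ∈ O := by
  intro O hO
  induction hO with
  | basic O hO =>
    intro hm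
    rcases hO with hS | ⟨z, rfl⟩
    · obtain ⟨u, hu⟩ := hf.1
      exact ⟨u, hu, fun u' hu' _ => hS.1 (sInf_le hu') hm⟩
    · have : ∃ u ∈ U, ¬ z ≤ u := by
        by_contra hcon
        push_neg at hcon
        exact hm (le_sInf hcon)
      obtain ⟨u, huU, huz⟩ := this
      exact ⟨u, huU, fun u' hu' hle hmem => huz (le_trans hmem hle)⟩
  | univ =>
    intro _
    obtain ⟨u, hu⟩ := hf.1
    exact ⟨u, hu, fun u' hu' _ => trivial⟩
  | inter O₁ O₂ h1 h2 ih1 ih2 =>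
    intro hm
    obtain ⟨u₁, hu₁, H₁⟩ := ih1 hm.1
    obtain ⟨u₂, hu₂, H₂⟩ := ih2 hm.2
    exact ⟨u₁ ⊓ u₂, hf.2.2 _ hu₁ _ hu₂,
      fun u' hu' hle => ⟨H₁ u' hu' (hle.trans inf_le_left), H₂ u' hu' (hle.trans inf_le_right)⟩⟩
  | sUnion S hS ih =>
    intro hm
    obtain ⟨O₀, hO₀S, hmO₀⟩ := hm
    obtain ⟨u, hu, H⟩ := ih O₀ hO₀S hmO₀
    exact ⟨u, hu, fun u' h1 h2 => ⟨O₀, hO₀S, H u' h1 h2⟩⟩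

lemma sInf_mem_of_closed_filter {X : Type*} [CompleteLattice X] {U : Set X}
    (hc : @IsClosed X (lawsonTop X) U) (hf : IsFilterSet U) : sInf U ∈ U := by
  by_contra hm
  have hopen : TopologicalSpace.GenerateOpen
      ({U : Set X | ScottOpen U} ∪ {S : Set X | ∃ x : X, S = (Set.Ici x)ᶜ}) Uᶜ := by
    have := hc.isOpen_compl
    exact this
  obtain ⟨u, hu, H⟩ := tail_lemma hf _ hopen hm
  exact (H u hu le_rfl) hu

lemma key {X Y : Type*} [CompleteLattice X] [CompleteLattice Y] (R : X → Y → Prop)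
    (hIm : ∀ U : Set X, @IsClopen X (lawsonTop X) U → @IsClopen Y (lawsonTop Y) (relImage R U))
    (hFy : ∀ x : X, IsFilterSet {y | R x y}ᶜ)
    (hFx : ∀ y : Y, IsFilterSet {x | R x y}ᶜ)
    (hOrd : ∀ x x' : X, {y | R x y} ⊆ {y | R x' y} → x' ≤ x)
    (U : Set X) (hU : @IsClopen X (lawsonTop X) U) (hUf : IsFilterSet U) :
    (@IsClopen Y (lawsonTop Y) (relImage R U)ᶜ ∧ IsFilterSet (relImage R U)ᶜ) ∧
      (relPreimage R ((relImage R U)ᶜ))ᶜ = U := by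
  have hmem : sInf U ∈ U := sInf_mem_of_closed_filter hU.1 hUf
  have mono : ∀ (x x' : X) (y : Y), x ≤ x' → R x' y → R x y := by
    intro x x' y hle hr
    by_contra hn
    exact ((hFx y).2.1 hle hn) hr
  have hIm_eq : relImage R U = {y | R (sInf U) y} := by
    ext y
    constructor
    · rintro ⟨x, hx, hr⟩
      exact mono _ _ _ (sInf_le hx) hr
    · intro hr
      exact ⟨sInf U, hmem, hr⟩
  refine ⟨⟨@IsClopen.compl Y (lawsonTop Y) _ (hIm U hU), ?_⟩, ?_⟩
  · rw [hIm_eq]; exact hFy (sInf U)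
  · ext x
    constructor
    · intro hx
      have hsub : {y | R x y} ⊆ {y | R (sInf U) y} := by
        intro y hy
        by_contra hny
        have hyc : y ∈ (relImage R U)ᶜ := by rw [hIm_eq]; exact hny
        exact hx ⟨y, hyc, hy⟩
      exact hUf.2.1 (hOrd x (sInf U) hsub) hmem
    · intro hxU hx
      obtain ⟨y, hyc, hr⟩ := hx
      exact hyc ⟨x, hxU, hr⟩

/-- For a DH-relation `R` between algebraic lattices `X`, `Y` with their
Lawson topologies, the Galois maps `φA = (R[A])ᶜ` and `ψB = (R⁻¹[B])ᶜ` restrict to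
mutually inverse inclusion-reversing bijections between clopen filters of `X` and of
`Y`. -/
theorem statement_6 {X Y : Type*} [CompleteLattice X] [CompleteLattice Y]
    (hX : ∀ x : X, x = sSup {k : X | CompleteLattice.IsCompactElement k ∧ k ≤ x})
    (hY : ∀ y : Y, y = sSup {k : Y | CompleteLattice.IsCompactElement k ∧ k ≤ y})
    (R : X → Y → Prop)
    (hR : IsDHRel (lawsonTop X) (lawsonTop Y) R) :
    (∀ U : Set X, @IsClopen X (lawsonTop X) U → IsFilterSet U →
      (@IsClopen Y (lawsonTop Y) (relImage R U)ᶜ ∧ IsFilterSet (relImage R U)ᶜ) ∧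
        (relPreimage R ((relImage R U)ᶜ))ᶜ = U) ∧
    (∀ V : Set Y, @IsClopen Y (lawsonTop Y) V → IsFilterSet V →
      (@IsClopen X (lawsonTop X) (relPreimage R V)ᶜ ∧ IsFilterSet (relPreimage R V)ᶜ) ∧
        (relImage R ((relPreimage R V)ᶜ))ᶜ = V) ∧
    (∀ U U' : Set X,
      @IsClopen X (lawsonTop X) U → IsFilterSet U →
      @IsClopen X (lawsonTop X) U' → IsFilterSet U' →
      (U ⊆ U' ↔ (relImage R U')ᶜ ⊆ (relImage R U)ᶜ)) := by
  obtain ⟨h1, h2, h3, h4, h5, h6, h7, h8⟩ := hR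
  have keyX := fun U hU hUf => key R h2 h5 h6 h7 U hU hUf
  have keyY := fun V hV hVf =>
    key (fun y x => R x y) h4 h6 h5 (fun y y' h => h8 y y' h) V hV hVf
  refine ⟨keyX, keyY, ?_⟩
  intro U U' hU hUf hU' hU'f
  constructor
  · intro hsub y hy
    intro hyIm
    obtain ⟨x, hx, hr⟩ := hyIm
    exact hy ⟨x, hsub hx, hr⟩
  · intro hsub
    have e1 := (keyX U hU hUf).2
    have e2 := (keyX U' hU' hU'f).2
    rw [← e1, ← e2]
    intro x hx hex
    obtain ⟨y, hy, hr⟩ := hex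
    exact hx ⟨y, hsub hy, hr⟩
end

section
/- Let X and Y be Priestley spaces and let R ⊆ X × Y be a relation that is closed as a subset of the product space X × Y. If x R y, then there exists x' ∈ X with x ≤ x', x' R y, and x' maximal in R⁻¹[y] (i.e. x' ≤ z and z R y imply z = x'); and there exists y' ∈ Y with y ≤ y', x R y', and y' maximal in R[x] (i.e. y' ≤ w and x R w imply w = y'). -/
open Set

private lemma priestley_le_closed {X : Type*} [TopologicalSpace X] [PartialOrder X]
    (hXp : ∀ x y : X, ¬x ≤ y → ∃ U : Set X, IsClopen U ∧ IsUpperSet U ∧ x ∈ U ∧ y ∉ U) :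
    IsClosed {p : X × X | p.1 ≤ p.2} := by
  rw [← isOpen_compl_iff]
  rw [isOpen_iff_mem_nhds]
  rintro ⟨a, b⟩ hab
  obtain ⟨U, hU, hUup, haU, hbU⟩ := hXp a b hab
  have : U ×ˢ Uᶜ ∈ nhds (a, b) :=
    (hU.isOpen.prod hU.compl.isOpen).mem_nhds ⟨haU, hbU⟩
  refine Filter.mem_of_superset this ?_
  rintro ⟨c, d⟩ ⟨hc, hd⟩ (h : c ≤ d)
  exact hd (hUup h hc)

private lemma exists_max_above {X : Type*} [TopologicalSpace X] [CompactSpace X] [PartialOrder X]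
    (hle : IsClosed {p : X × X | p.1 ≤ p.2}) {F : Set X} (hF : IsClosed F)
    {x : X} (hx : x ∈ F) : ∃ m, x ≤ m ∧ m ∈ F ∧ ∀ z, m ≤ z → z ∈ F → z = m := by
  have hIci : ∀ a : X, IsClosed (Ici a) := fun a => by
    have : Ici a = (fun z => ((a, z) : X × X)) ⁻¹' {p : X × X | p.1 ≤ p.2} := rfl
    rw [this]
    exact hle.preimage (Continuous.prodMk_right a)
  have hchain : ∀ c ⊆ F, IsChain (· ≤ ·) c → ∀ y ∈ c, ∃ ub ∈ F, ∀ z ∈ c, z ≤ ub := by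
    intro c hcF hc y hy
    have hcne : Nonempty c := ⟨⟨y, hy⟩⟩
    set t : c → Set X := fun a => F ∩ Ici (a : X) with ht
    have hdir : Directed (· ⊇ ·) t := by
      rintro ⟨a, ha⟩ ⟨b, hb⟩
      rcases hc.total ha hb with h | h
      · exact ⟨⟨b, hb⟩, fun z hz => ⟨hz.1, h.trans hz.2⟩, fun z hz => hz⟩
      · exact ⟨⟨a, ha⟩, fun z hz => hz, fun z hz => ⟨hz.1, h.trans hz.2⟩⟩
    have hnonempty : ∀ a : c, (t a).Nonempty := fun ⟨a, ha⟩ => ⟨a, hcF ha, le_rfl⟩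
    have hclosed : ∀ a : c, IsClosed (t a) := fun a => hF.inter (hIci _)
    have hcompact : ∀ a : c, IsCompact (t a) := fun a => (hclosed a).isCompact
    obtain ⟨ub, hub⟩ := IsCompact.nonempty_iInter_of_directed_nonempty_isCompact_isClosed
      t hdir hnonempty hcompact hclosed
    simp only [mem_iInter] at hub
    exact ⟨ub, (hub ⟨y, hy⟩).1, fun z hz => (hub ⟨z, hz⟩).2⟩
  obtain ⟨m, hxm, hmF, hm⟩ := zorn_le_nonempty₀ F hchain x hx
  exact ⟨m, hxm, hmF, fun z hmz hzF => le_antisymm (hm hzF hmz) hmz⟩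

/-- For Priestley spaces `X`, `Y` and a closed relation `R ⊆ X × Y`, every
related pair `x R y` can be enlarged to a pair that is maximal in each coordinate. -/
theorem statement_8 {X Y : Type*}
    [TopologicalSpace X] [CompactSpace X] [PartialOrder X]
    [TopologicalSpace Y] [CompactSpace Y] [PartialOrder Y]
    (hXp : ∀ x y : X, ¬x ≤ y → ∃ U : Set X, IsClopen U ∧ IsUpperSet U ∧ x ∈ U ∧ y ∉ U)
    (hYp : ∀ x y : Y, ¬x ≤ y → ∃ U : Set Y, IsClopen U ∧ IsUpperSet U ∧ x ∈ U ∧ y ∉ U)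
    (R : X → Y → Prop) (hR : IsClosed {p : X × Y | R p.1 p.2})
    (x : X) (y : Y) (hxy : R x y) :
    (∃ x' : X, x ≤ x' ∧ R x' y ∧ ∀ z : X, x' ≤ z → R z y → z = x') ∧
    (∃ y' : Y, y ≤ y' ∧ R x y' ∧ ∀ w : Y, y' ≤ w → R x w → w = y') := by
  constructor
  · have hF : IsClosed {z : X | R z y} := by
      have : {z : X | R z y} = (fun z => ((z, y) : X × Y)) ⁻¹' {p : X × Y | R p.1 p.2} := rfl
      rw [this]
      exact hR.preimage (continuous_id.prodMk continuous_const)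
    obtain ⟨m, h1, h2, h3⟩ := exists_max_above (priestley_le_closed hXp) hF hxy
    exact ⟨m, h1, h2, fun z hz hR' => h3 z hz hR'⟩
  · have hF : IsClosed {w : Y | R x w} := by
      have : {w : Y | R x w} = (fun w => ((x, w) : X × Y)) ⁻¹' {p : X × Y | R p.1 p.2} := rfl
      rw [this]
      exact hR.preimage (Continuous.prodMk_right x)
    obtain ⟨m, h1, h2, h3⟩ := exists_max_above (priestley_le_closed hYp) hF hxy
    exact ⟨m, h1, h2, fun w hw hR' => h3 w hw hR'⟩
end

section
/- Let X and Y be Priestley spaces and let R ⊆ X × Y be a relation such that: (a) for all x, x' ∈ X, x ≤ x' if and only if R[x'] ⊆ R[x]; and (b) whenever ¬(x R y) there is a clopen upper set U ⊆ X with U = □◆U, x ∈ U, and y ∉ ◆U. (Both conditions hold in every Gehrke–van Gool space.) Then for every x ∈ X, the principal upset ↑x equals the intersection of all clopen upper sets U ⊆ X satisfying U = □◆U and x ∈ U. -/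
/-- `◆A = R[A] = {y : ∃ x ∈ A, x R y}`. -/
def relDia {X Y : Type*} (R : X → Y → Prop) (A : Set X) : Set Y :=
  {y | ∃ x ∈ A, R x y}

/-- `□B = {x : R[x] ⊆ B}`. -/
def relBox {X Y : Type*} (R : X → Y → Prop) (B : Set Y) : Set X :=
  {x | ∀ y, R x y → y ∈ B}

/-- For Priestley spaces `X`, `Y` and a relation `R` satisfying
`x ≤ x' ↔ R[x'] ⊆ R[x]` and the Gehrke–van Gool separation axiom, the principal upset
`↑x` is the intersection of all clopen upper sets `U` with `U = □◆U` containing `x`. -/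
theorem statement_10 {X Y : Type*}
    [TopologicalSpace X] [CompactSpace X] [PartialOrder X]
    [TopologicalSpace Y] [CompactSpace Y] [PartialOrder Y]
    (hXp : ∀ x y : X, ¬x ≤ y → ∃ U : Set X, IsClopen U ∧ IsUpperSet U ∧ x ∈ U ∧ y ∉ U)
    (hYp : ∀ x y : Y, ¬x ≤ y → ∃ U : Set Y, IsClopen U ∧ IsUpperSet U ∧ x ∈ U ∧ y ∉ U)
    (R : X → Y → Prop)
    (ha : ∀ x x' : X, x ≤ x' ↔ {y : Y | R x' y} ⊆ {y : Y | R x y})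
    (hb : ∀ (x : X) (y : Y), ¬R x y → ∃ U : Set X, IsClopen U ∧ IsUpperSet U ∧
      U = relBox R (relDia R U) ∧ x ∈ U ∧ y ∉ relDia R U)
    (x : X) :
    Set.Ici x =
      ⋂₀ {U : Set X | IsClopen U ∧ IsUpperSet U ∧ U = relBox R (relDia R U) ∧ x ∈ U} := by
  apply Set.Subset.antisymm
  · intro z hz
    rw [Set.mem_sInter]
    intro U hU
    exact hU.2.1 hz hU.2.2.2
  · intro z hz
    rw [Set.mem_Ici, ha]
    intro y hy
    by_contra hxy
    obtain ⟨U, hc, hu, hbox, hxU, hyU⟩ := hb x y hxy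
    have hzU : z ∈ U := Set.mem_sInter.mp hz U ⟨hc, hu, hbox, hxU⟩
    rw [hbox] at hzU
    exact hyU (hzU y hy)
end

section
/- Let Z be a coherent lattice equipped with its Lawson topology. Then the set of d-prime elements of Z is a closed subset of Z. -/
/-- The meet `⨅M` of a finite set `M` is distributive if
`a ⊔ ⨅M = ⨅{a ⊔ m : m ∈ M}` for every `a`. -/
def DistributiveMeet {Z : Type*} [CompleteLattice Z] (M : Set Z) : Prop :=
  ∀ a : Z, a ⊔ sInf M = sInf ((fun m => a ⊔ m) '' M)

/-- `x` is d-prime: `x ≠ ⊤` and whenever `M` is a finite set of compact elements whose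
meet is distributive and `⨅M ≤ x`, then `m ≤ x` for some `m ∈ M`. -/
def DPrime {Z : Type*} [CompleteLattice Z] (x : Z) : Prop :=
  x ≠ ⊤ ∧ ∀ M : Set Z, M.Finite → (∀ m ∈ M, IsCompactElement m) →
    DistributiveMeet M → sInf M ≤ x → ∃ m ∈ M, m ≤ x

lemma aux_sInf_compact {Z : Type*} [CompleteLattice Z]
    (htop : IsCompactElement (⊤ : Z))
    (hinf : ∀ k l : Z, IsCompactElement k →
      IsCompactElement l → IsCompactElement (k ⊓ l))
    {M : Set Z} (hM : M.Finite) (hc : ∀ m ∈ M, IsCompactElement m) :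
    IsCompactElement (sInf M) := by
  refine Set.Finite.induction_on
    (motive := fun M _ => (∀ m ∈ M, IsCompactElement m) →
      IsCompactElement (sInf M)) _ hM (fun _ => by simpa using htop)
    (@fun a s => ?_) hc
  intro _ _ ih hc'
  rw [sInf_insert]
  exact hinf _ _ (hc' _ (Set.mem_insert _ _))
    (ih fun m hm => hc' m (Set.mem_insert_of_mem _ hm))

/-- In a coherent lattice with its Lawson topology, the set of d-prime
elements is closed. -/
theorem statement_11 {Z : Type*} [CompleteLattice Z]
    (halg : ∀ x : Z, x = sSup {k : Z | IsCompactElement k ∧ k ≤ x})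
    (htop : IsCompactElement (⊤ : Z))
    (hinf : ∀ k l : Z, IsCompactElement k →
      IsCompactElement l → IsCompactElement (k ⊓ l)) :
    @IsClosed Z (lawsonTop Z) {x : Z | DPrime x} := by
  letI : TopologicalSpace Z := lawsonTop Z
  rw [← isOpen_compl_iff]
  have heq : {x : Z | DPrime x}ᶜ =
      ⋃ M ∈ {M : Set Z | M.Finite ∧ (∀ m ∈ M, IsCompactElement m) ∧
        DistributiveMeet M},
        (Set.Ici (sInf M) ∩ ⋂ m ∈ M, (Set.Ici m)ᶜ) := by
    ext x
    simp only [Set.mem_compl_iff, Set.mem_setOf_eq, Set.mem_iUnion, Set.mem_inter_iff,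
      Set.mem_Ici, Set.mem_iInter, Set.mem_compl_iff, exists_prop]
    constructor
    · intro hx
      by_cases hxt : x = ⊤
      · refine ⟨∅, ⟨Set.finite_empty, by simp, fun a => by simp⟩, by simp [hxt], by simp⟩
      · rw [DPrime] at hx
        push_neg at hx
        obtain ⟨M, hMf, hMc, hMd, hle, hno⟩ := hx hxt
        exact ⟨M, ⟨hMf, hMc, hMd⟩, hle, hno⟩
    · rintro ⟨M, ⟨hMf, hMc, hMd⟩, hle, hno⟩ ⟨hxt, hdp⟩
      obtain ⟨m, hm, hmx⟩ := hdp M hMf hMc hMd hle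
      exact hno m hm hmx
  rw [heq]
  refine isOpen_biUnion fun M hM => IsOpen.inter ?_ ?_
  · refine TopologicalSpace.isOpen_generateFrom_of_mem (Or.inl ?_)
    refine ⟨fun a b hab ha => le_trans ha hab, fun S hS hdir hsup => ?_⟩
    have hk := aux_sInf_compact htop hinf hM.1 hM.2.1
    obtain ⟨y, hy, hky⟩ :=
      (CompleteLattice.isCompactElement_iff_le_of_directed_sSup_le Z (sInf M)).mp hk
        S hS hdir hsup
    exact ⟨y, hy, hky⟩
  · exact hM.1.isOpen_biInter fun m _ =>
      TopologicalSpace.isOpen_generateFrom_of_mem (Or.inr ⟨m, rfl⟩)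
end

section
/- Let X be a coherent lattice. Then every meet-irreducible element of X is d-prime: if x ≠ ⊤ and x = y ⊓ z implies x = y or x = z, then for every finite set M of compact elements of X such that ⨅M is a distributive meet and ⨅M ≤ x, there exists m ∈ M with m ≤ x. -/
lemma irr_finite_inf {X : Type*} [CompleteLattice X] (x : X)
    (hirr : ∀ y z : X, x = y ⊓ z → x = y ∨ x = z) :
    ∀ S : Set X, S.Finite → x = sInf S → x = ⊤ ∨ ∃ s ∈ S, x = s := by
  intro S hS
  refine Set.Finite.induction_on (motive := fun S _ => x = sInf S → x = ⊤ ∨ ∃ s ∈ S, x = s) S hS (fun h => ?_) ?_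
  · left; simpa using h
  · rintro a S - - ih h
    rw [sInf_insert] at h
    rcases hirr _ _ h with h1 | h2
    · exact Or.inr ⟨a, Set.mem_insert a S, h1⟩
    · rcases ih h2 with h | ⟨s, hs, hxs⟩
      · exact Or.inl h
      · exact Or.inr ⟨s, Set.mem_insert_of_mem a hs, hxs⟩

/-- In a coherent lattice, every meet-irreducible element is d-prime. -/
theorem statement_12 {X : Type*} [CompleteLattice X]
    (halg : ∀ x : X, x = sSup {k : X | IsCompactElement k ∧ k ≤ x})
    (htop : IsCompactElement (⊤ : X))
    (hinf : ∀ k l : X, IsCompactElement k →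
      IsCompactElement l → IsCompactElement (k ⊓ l))
    (x : X) (hne : x ≠ ⊤) (hirr : ∀ y z : X, x = y ⊓ z → x = y ∨ x = z) :
    ∀ M : Set X, M.Finite → (∀ m ∈ M, IsCompactElement m) →
      DistributiveMeet M → sInf M ≤ x → ∃ m ∈ M, m ≤ x := by
  intro M hMfin _ hdist hle
  have hx : x = sInf ((fun m => x ⊔ m) '' M) := by
    rw [← hdist x, sup_eq_left.mpr hle]
  rcases irr_finite_inf x hirr _ (hMfin.image _) hx with h | ⟨s, hs, hxs⟩
  · exact absurd h hne
  · rcases hs with ⟨m, hm, rfl⟩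
    exact ⟨m, hm, le_sup_right.trans hxs.ge⟩
end

section
/- Let X be a coherent lattice equipped with its Lawson topology, and let U ⊆ X be an open filter. If x ∉ U and x is maximal among elements not in U (i.e. x ≤ z and z ∉ U imply z = x), then x is meet-irreducible: x ≠ ⊤, and x = y ⊓ z implies x = y or x = z. -/
/-- In a coherent lattice with its Lawson topology, if `U` is an open
filter and `x` is maximal among elements not in `U`, then `x` is meet-irreducible. -/
theorem statement_13 {X : Type*} [CompleteLattice X]
    (halg : ∀ x : X, x = sSup {k : X | IsCompactElement k ∧ k ≤ x})
    (htop : IsCompactElement (⊤ : X))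
    (hinf : ∀ k l : X, IsCompactElement k →
      IsCompactElement l → IsCompactElement (k ⊓ l))
    (U : Set X) (hUopen : @IsOpen X (lawsonTop X) U) (hUfilt : IsFilterSet U)
    (x : X) (hx : x ∉ U) (hmax : ∀ z : X, x ≤ z → z ∉ U → z = x) :
    x ≠ ⊤ ∧ ∀ y z : X, x = y ⊓ z → x = y ∨ x = z := by
  obtain ⟨⟨w, hw⟩, hup, hmeet⟩ := hUfilt
  have htopU : (⊤ : X) ∈ U := hup le_top hw
  constructor
  · rintro rfl; exact hx htopU
  · intro y z hxyz
    by_contra h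
    push_neg at h
    obtain ⟨hy, hz⟩ := h
    have hyU : y ∈ U := by
      by_contra hyU
      exact hy ((hmax y (hxyz ▸ inf_le_left) hyU).symm)
    have hzU : z ∈ U := by
      by_contra hzU
      exact hz ((hmax z (hxyz ▸ inf_le_right) hzU).symm)
    exact hx (hxyz ▸ hmeet y hyU z hzU)
end

section
/- Let Z be a set with two preorders ≤₁ and ≤₂, and define x R y if and only if there exists z with x ≤₁ z and y ≤₂ z. Write φA = Z ∖ ↓₂A and ψB = Z ∖ ↓₁B for A, B ⊆ Z. Assume: (i) whenever x ≰₁ y there is a ≤₁-upper set C with ψ(φC) = C, x ∈ C, and y ∉ C; (ii) whenever x ≰₂ y there is a ≤₁-upper set C with x ∈ φC and y ∉ φC. (These hypotheses hold in every Urquhart space.) Then for all x, y ∈ Z: x ≤₁ y ⟺ R[y] ⊆ R[x], and x ≤₂ y ⟺ R⁻¹[y] ⊆ R⁻¹[x]. -/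
/-- The `r`-downset of `A`: `{z : ∃ a ∈ A, r z a}`. -/
def downSet {Z : Type*} (r : Z → Z → Prop) (A : Set Z) : Set Z :=
  {z | ∃ a ∈ A, r z a}

/-- For two preorders `≤₁`, `≤₂` on `Z`, the relation
`x R y ↔ ∃ z, x ≤₁ z ∧ y ≤₂ z`, and the Urquhart separation hypotheses (i) and (ii),
one has `x ≤₁ y ↔ R[y] ⊆ R[x]` and `x ≤₂ y ↔ R⁻¹[y] ⊆ R⁻¹[x]`. -/
theorem statement_15 {Z : Type*} (le1 le2 : Z → Z → Prop)
    (hr1 : ∀ z, le1 z z) (ht1 : ∀ a b c : Z, le1 a b → le1 b c → le1 a c)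
    (hr2 : ∀ z, le2 z z) (ht2 : ∀ a b c : Z, le2 a b → le2 b c → le2 a c)
    (R : Z → Z → Prop) (hR : ∀ x y, R x y ↔ ∃ z : Z, le1 x z ∧ le2 y z)
    (hi : ∀ x y : Z, ¬le1 x y → ∃ C : Set Z,
      (∀ a ∈ C, ∀ b, le1 a b → b ∈ C) ∧
      (downSet le1 ((downSet le2 C)ᶜ))ᶜ = C ∧ x ∈ C ∧ y ∉ C)
    (hii : ∀ x y : Z, ¬le2 x y → ∃ C : Set Z,
      (∀ a ∈ C, ∀ b, le1 a b → b ∈ C) ∧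
      x ∈ (downSet le2 C)ᶜ ∧ y ∉ (downSet le2 C)ᶜ) :
    ∀ x y : Z,
      (le1 x y ↔ {w : Z | R y w} ⊆ {w : Z | R x w}) ∧
      (le2 x y ↔ {w : Z | R w y} ⊆ {w : Z | R w x}) := by
  intro x y
  constructor
  · constructor
    · intro hxy w hw
      obtain ⟨z, hyz, hwz⟩ := (hR y w).mp hw
      exact (hR x w).mpr ⟨z, ht1 _ _ _ hxy hyz, hwz⟩
    · intro hsub
      by_contra hxy
      obtain ⟨C, hup, hfix, hxC, hyC⟩ := hi x y hxy
      have hy : y ∈ downSet le1 ((downSet le2 C)ᶜ) := by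
        by_contra h; exact hyC (hfix ▸ h)
      obtain ⟨w, hwφ, hyw⟩ := hy
      have : R y w := (hR y w).mpr ⟨w, hyw, hr2 w⟩
      obtain ⟨z, hxz, hwz⟩ := (hR x w).mp (hsub this)
      exact hwφ ⟨z, hup x hxC z hxz, hwz⟩
  · constructor
    · intro hxy w hw
      obtain ⟨z, hwz, hyz⟩ := (hR w y).mp hw
      exact (hR w x).mpr ⟨z, hwz, ht2 _ _ _ hxy hyz⟩
    · intro hsub
      by_contra hxy
      obtain ⟨C, hup, hxφ, hyφ⟩ := hii x y hxy
      have hy : y ∈ downSet le2 C := not_not.mp hyφ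
      obtain ⟨a, haC, hya⟩ := hy
      have : R a y := (hR a y).mpr ⟨a, hr1 a, hya⟩
      obtain ⟨z, haz, hxz⟩ := (hR a x).mp (hsub this)
      exact hxφ ⟨z, hup a haC z haz, hxz⟩
end
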